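/- arXiv:0910.0460 — 8 statements merged into one kernel-verified Lean document; each statement's English description precedes it below -/
import Mathlib

section
/- Let H = (V,E) be a finite hypergraph with a variable v_e assigned to each edge e, let f : E → ℕ≥1, and let U ⊆ V. For X ⊆ V \ U, define W(X) = Σ_{E''} Π_{e ∈ E''} v_e^{f(e)}, where E'' ranges over subsets of E satisfying: (Avoidance) every e ∈ E'' is disjoint from X; (Cardinality) |E''| = |V|/k; (Coverage) U ⊆ ∪_{e∈E''} e; (Disjointness) distinct edges of E'' have disjoint intersections with U. Then, working in a multivariate polynomial ring over a field of characteristic 2, Σ_{X ⊆ V\U} W(X) = Σ_{E' ∈ S} Π_{e ∈ E'} v_e^{f(e)}, where S is the set of exact covers of V by edges of E (partitions of V into edges). -/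
open scoped Classical

lemma aux_pairwise_disjoint {α ι : Type*} [DecidableEq α] (s : Finset ι) (g : ι → Finset α)
    (h : (s.biUnion g).card = ∑ e ∈ s, (g e).card) :
    ∀ e₁ ∈ s, ∀ e₂ ∈ s, e₁ ≠ e₂ → Disjoint (g e₁) (g e₂) := by
  classical
  induction s using Finset.induction_on with
  | empty => simp
  | @insert a s ha ih =>
    rw [Finset.biUnion_insert, Finset.sum_insert ha] at h
    have h1 : ((s.biUnion g).card : ℕ) ≤ ∑ e ∈ s, (g e).card := Finset.card_biUnion_le
    have h2 : (g a ∪ s.biUnion g).card ≤ (g a).card + (s.biUnion g).card :=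
      Finset.card_union_le _ _
    have hBcard : (s.biUnion g).card = ∑ e ∈ s, (g e).card := by omega
    have hdu : (g a ∪ s.biUnion g).card = (g a).card + (s.biUnion g).card := by omega
    have hdisj : Disjoint (g a) (s.biUnion g) :=
      Finset.card_union_eq_card_add_card.mp hdu
    intro e₁ he₁ e₂ he₂ hne
    simp only [Finset.mem_insert] at he₁ he₂
    rcases he₁ with rfl | he₁ <;> rcases he₂ with rfl | he₂
    · exact absurd rfl hne
    · exact hdisj.mono_right (Finset.subset_biUnion_of_mem g he₂)
    · exact (hdisj.mono_right (Finset.subset_biUnion_of_mem g he₁)).symm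
    · exact ih hBcard e₁ he₁ e₂ he₂ hne


/-- Inclusion–exclusion over a field of characteristic 2 for exact covers.
`V` is the vertex set, `E` a finite (multi)set of edge indices, `edge e ⊆ V`
the edge of index `e`, each of size `k` (`k`-uniform), and `k ∣ |V|`.
Variables `v_e` are the indeterminates `MvPolynomial.X e` of a multivariate
polynomial ring over a field `F` of characteristic 2, and `f : ι → ℕ` maps
every edge to a positive integer.  For `X ⊆ V \ U`, `W X` sums
`∏_{e ∈ E''} v_e ^ f e` over all `E'' ⊆ E` satisfying Avoidance (w.r.t. `X`),
Cardinality, Coverage (of `U`), and Disjointness (on `U`).  Then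
`∑_{X ⊆ V \ U} W X` equals the sum over all exact covers `E'` of `V`
of `∏_{e ∈ E'} v_e ^ f e`. -/
theorem inclusion_exclusion_exact_cover_char_two
    {α ι : Type*} [DecidableEq α] (V : Finset α) (E : Finset ι)
    (edge : ι → Finset α) (k : ℕ) (hk : 0 < k)
    (huniform : ∀ e ∈ E, (edge e).card = k ∧ edge e ⊆ V)
    (hdvd : k ∣ V.card)
    (F : Type*) [Field F] [CharP F 2]
    (f : ι → ℕ) (hf : ∀ e ∈ E, 1 ≤ f e)
    (U : Finset α) (hU : U ⊆ V) :
    (∑ X ∈ (V \ U).powerset,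
      ∑ E'' ∈ E.powerset.filter (fun E'' =>
          (∀ e ∈ E'', Disjoint (edge e) X) ∧          -- Avoidance
          E''.card = V.card / k ∧                      -- Cardinality
          U ⊆ E''.biUnion edge ∧                       -- Coverage
          (∀ e₁ ∈ E'', ∀ e₂ ∈ E'', e₁ ≠ e₂ →
            Disjoint (edge e₁ ∩ U) (edge e₂ ∩ U))),    -- Disjointness
        ∏ e ∈ E'', (MvPolynomial.X e : MvPolynomial ι F) ^ f e)
    = ∑ E' ∈ E.powerset.filter (fun E' =>
          E'.biUnion edge = V ∧
          (∀ e₁ ∈ E', ∀ e₂ ∈ E', e₁ ≠ e₂ → Disjoint (edge e₁) (edge e₂))),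
        ∏ e ∈ E', (MvPolynomial.X e : MvPolynomial ι F) ^ f e := by
  classical
  simp only [Finset.sum_filter]
  rw [Finset.sum_comm]
  refine Finset.sum_congr rfl fun E'' hE'' => ?_
  simp only [Finset.mem_powerset] at hE''
  set B := E''.biUnion edge with hBdef
  set t : MvPolynomial ι F := ∏ e ∈ E'', (MvPolynomial.X e : MvPolynomial ι F) ^ f e with ht
  have hBV : B ⊆ V := by
    intro x hx
    rw [hBdef, Finset.mem_biUnion] at hx
    obtain ⟨e, he, hxe⟩ := hx
    exact (huniform e (hE'' he)).2 hxe
  have hsumcard : ∑ e ∈ E'', (edge e).card = k * E''.card := by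
    rw [Finset.sum_congr rfl (fun e he => (huniform e (hE'' he)).1), Finset.sum_const,
      smul_eq_mul, mul_comm]
  by_cases hR : E''.card = V.card / k ∧ U ⊆ B ∧
      (∀ e₁ ∈ E'', ∀ e₂ ∈ E'', e₁ ≠ e₂ → Disjoint (edge e₁ ∩ U) (edge e₂ ∩ U))
  · have hfil : (V \ U).powerset.filter (fun X => ∀ e ∈ E'', Disjoint (edge e) X)
        = ((V \ U) \ B).powerset := by
      ext X
      simp only [Finset.mem_filter, Finset.mem_powerset, Finset.subset_sdiff]
      constructor
      · rintro ⟨h1, h2⟩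
        exact ⟨h1, (Finset.disjoint_biUnion_left _ _ _).2 h2 |>.symm⟩
      · rintro ⟨h1, h2⟩
        exact ⟨h1, fun e he => (Finset.disjoint_biUnion_left _ _ _).1 h2.symm e he⟩
    by_cases hcov : V \ U ⊆ B
    · have hempty : (V \ U) \ B = ∅ := Finset.sdiff_eq_empty_iff_subset.mpr hcov
      have hBeqV : B = V := by
        apply Finset.Subset.antisymm hBV
        intro x hx
        by_cases hxU : x ∈ U
        · exact hR.2.1 hxU
        · exact hcov (Finset.mem_sdiff.mpr ⟨hx, hxU⟩)
      have hglob : ∀ e₁ ∈ E'', ∀ e₂ ∈ E'', e₁ ≠ e₂ → Disjoint (edge e₁) (edge e₂) := by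
        apply aux_pairwise_disjoint
        rw [← hBdef, hBeqV, hsumcard, hR.1, Nat.mul_div_cancel' hdvd]
      have hXsum : (∑ X ∈ (V \ U).powerset,
          if (∀ e ∈ E'', Disjoint (edge e) X) ∧ E''.card = V.card / k ∧ U ⊆ B ∧
            (∀ e₁ ∈ E'', ∀ e₂ ∈ E'', e₁ ≠ e₂ → Disjoint (edge e₁ ∩ U) (edge e₂ ∩ U))
          then t else 0) = ∑ X ∈ (V \ U).powerset,
          if (∀ e ∈ E'', Disjoint (edge e) X) then t else 0 := by
        refine Finset.sum_congr rfl fun X hX => ?_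
        by_cases hA : ∀ e ∈ E'', Disjoint (edge e) X
        · rw [if_pos ⟨hA, hR⟩, if_pos hA]
        · rw [if_neg (by tauto), if_neg hA]
      rw [hXsum, ← Finset.sum_filter, hfil, hempty, Finset.powerset_empty,
        Finset.sum_singleton, if_pos ⟨hBeqV, hglob⟩]
    · have hne : ((V \ U) \ B).card ≠ 0 := by
        rw [Finset.card_ne_zero, Finset.sdiff_nonempty]
        exact hcov
      have hXsum : (∑ X ∈ (V \ U).powerset,
          if (∀ e ∈ E'', Disjoint (edge e) X) ∧ E''.card = V.card / k ∧ U ⊆ B ∧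
            (∀ e₁ ∈ E'', ∀ e₂ ∈ E'', e₁ ≠ e₂ → Disjoint (edge e₁ ∩ U) (edge e₂ ∩ U))
          then t else 0) = ∑ X ∈ (V \ U).powerset,
          if (∀ e ∈ E'', Disjoint (edge e) X) then t else 0 := by
        refine Finset.sum_congr rfl fun X hX => ?_
        by_cases hA : ∀ e ∈ E'', Disjoint (edge e) X
        · rw [if_pos ⟨hA, hR⟩, if_pos hA]
        · rw [if_neg (by tauto), if_neg hA]
      have h2 : ((2 : ℕ) : MvPolynomial ι F) = 0 := by
        exact_mod_cast CharP.cast_eq_zero (MvPolynomial ι F) 2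
      rw [hXsum, ← Finset.sum_filter, hfil, Finset.sum_const, Finset.card_powerset,
        nsmul_eq_mul, Nat.cast_pow, h2, zero_pow hne, zero_mul,
        if_neg (by rintro ⟨hBeqV, -⟩; exact hcov (hBeqV ▸ Finset.sdiff_subset))]
  · rw [Finset.sum_eq_zero, if_neg]
    · rintro ⟨hBeqV, hglob⟩
      apply hR
      have hV : V.card = k * E''.card := by
        rw [← hBeqV, hBdef, Finset.card_biUnion hglob, hsumcard]
      refine ⟨?_, ?_, ?_⟩
      · rw [hV, Nat.mul_div_cancel_left _ hk]
      · rw [hBdef] at hBeqV ⊢; rw [hBeqV]; exact hU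
      · intro e₁ he₁ e₂ he₂ hne
        exact (hglob e₁ he₁ e₂ he₂ hne).mono Finset.inter_subset_left Finset.inter_subset_left
    · intro X hX
      rw [if_neg (by tauto)]
end

section
/- Over a field of characteristic 2, the determinant of any symmetric n×n matrix A equals Σ_σ Π_i A(i,σ(i)), where σ ranges only over involutions (permutations with σ∘σ = id); the contributions of non-involutive permutations cancel in pairs. -/
open scoped Classical

/-- Over a commutative ring of characteristic 2, the determinant of a symmetric
matrix equals the sum over involutive permutations only, of the product of
entries: contributions of non-involutive permutations cancel in pairs. -/
theorem det_symm_eq_sum_involutions_char_two {R : Type*} [CommRing R]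
    [CharP R 2] {n : ℕ} (A : Matrix (Fin n) (Fin n) R) (hA : A.IsSymm) :
    A.det = ∑ σ ∈ (Finset.univ.filter fun σ : Equiv.Perm (Fin n) => σ * σ = 1),
      ∏ i, A i (σ i) := by
  have hsym : ∀ i j, A j i = A i j := fun i j => hA.apply i j
  have hdet : A.det = ∑ σ : Equiv.Perm (Fin n), ∏ i, A i (σ i) := by
    rw [Matrix.det_apply']
    refine Finset.sum_congr rfl fun σ _ => ?_
    have hsign : ((Equiv.Perm.sign σ : ℤ) : R) = 1 := by
      rcases Int.units_eq_one_or (Equiv.Perm.sign σ) with h | h <;> rw [h] <;>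
        simp [CharTwo.neg_eq]
    rw [hsign, one_mul]
    exact Finset.prod_congr rfl fun i _ => hsym i (σ i)
  rw [hdet, ← Finset.sum_filter_add_sum_filter_not Finset.univ
    (fun σ : Equiv.Perm (Fin n) => σ * σ = 1)]
  have hzero : ∑ σ ∈ (Finset.univ.filter fun σ : Equiv.Perm (Fin n) => ¬ σ * σ = 1),
      ∏ i, A i (σ i) = 0 := by
    refine Finset.sum_involution (fun σ _ => σ⁻¹) (fun σ hσ => ?_) (fun σ hσ _ => ?_)
      (fun σ hσ => ?_) (fun σ hσ => ?_)
    · have hprod : ∏ i, A i (σ⁻¹ i) = ∏ i, A i (σ i) := by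
        calc ∏ i, A i (σ⁻¹ i) = ∏ i, A (σ i) (σ⁻¹ (σ i)) :=
              (Equiv.prod_comp σ fun i => A i (σ⁻¹ i)).symm
          _ = ∏ i, A (σ i) i := by simp
          _ = ∏ i, A i (σ i) := Finset.prod_congr rfl fun i _ => hsym i (σ i)
      rw [hprod, CharTwo.add_self_eq_zero]
    · simp only [Finset.mem_filter] at hσ
      intro h
      exact hσ.2 (by nth_rewrite 2 [← h]; exact mul_inv_cancel σ)
    · simp only [Finset.mem_filter, Finset.mem_univ, true_and] at hσ ⊢
      intro h
      apply hσ
      rw [← inv_inv σ, ← mul_inv_rev, h, inv_one]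
    · simp
  rw [hzero, add_zero]
end

section
/- For a bad permutation σ (one with σ∘σ ≠ id) of {1,...,n}, the cycle-reversal operation D — which reverses the unique cycle of length > 2 through the least i with σ(σ(i)) ≠ i — satisfies D(D(σ)) = σ and D(σ) ≠ σ, and thus pairs up the bad permutations into 2-element orbits; in particular the number of bad permutations of {1,...,n} is even. -/
/-!
`D σ` is `σ` with the cycle `c` through the least bad point `x` replaced by `c⁻¹`, i.e.
`c⁻¹ * c⁻¹ * σ`. Reversing a cycle does not change which points satisfy `σ (σ y) = y`, so `D σ`
is again bad, with the same least bad point `x`, and its cycle through `x` is `c⁻¹`; reversing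
that cycle gives back `σ`. Moreover `D σ x = σ⁻¹ x ≠ σ x`. So `D` is a fixed-point-free
involution of the bad permutations, and there is an even number of them.
-/

open scoped Classical

/-- The cycle-reversal operation `D`: for a bad permutation `σ` (one with
`σ ∘ σ ≠ id`), let `i` be the least point with `σ (σ i) ≠ i`; `D σ` agrees
with `σ` off the cycle of `i` and reverses (inverts) the cycle through `i`,
which has length `> 2`.  (Multiplying by `(σ.cycleOf i)⁻¹` twice replaces the
cycle of `i` in `σ` by its reversal and leaves the rest of `σ` unchanged.)
Good permutations are left fixed. -/
noncomputable def cycleReversal {n : ℕ} (σ : Equiv.Perm (Fin n)) :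
    Equiv.Perm (Fin n) :=
  if h : σ * σ ≠ 1 then
    (σ.cycleOf ((Finset.univ.filter fun i => σ (σ i) ≠ i).min' (by
        rw [Ne, Equiv.ext_iff] at h
        push_neg at h
        obtain ⟨i, hi⟩ := h
        exact ⟨i, Finset.mem_filter.mpr ⟨Finset.mem_univ _,
          by simpa [Equiv.Perm.mul_apply] using hi⟩⟩)))⁻¹
      * (σ.cycleOf ((Finset.univ.filter fun i => σ (σ i) ≠ i).min' (by
        rw [Ne, Equiv.ext_iff] at h
        push_neg at h
        obtain ⟨i, hi⟩ := h
        exact ⟨i, Finset.mem_filter.mpr ⟨Finset.mem_univ _,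
          by simpa [Equiv.Perm.mul_apply] using hi⟩⟩)))⁻¹
      * σ
  else σ


namespace Finset

theorem even_card_of_involution {α : Type*} {s : Finset α} (g : α → α)
    (hg_mem : ∀ a ∈ s, g a ∈ s) (hg_inv : ∀ a ∈ s, g (g a) = a) (hg_ne : ∀ a ∈ s, g a ≠ a) :
    Even #s := by
  rw [← ZMod.natCast_eq_zero_iff_even, card_eq_sum_ones, Nat.cast_sum, Nat.cast_one]
  exact sum_involution (fun a _ => g a) (fun _ _ => by decide) (fun a ha _ => hg_ne a ha)
    hg_mem hg_inv

end Finset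

namespace Equiv.Perm

variable {α : Type*}

theorem commute_cycleOf_self (σ : Perm α) [DecidableRel σ.SameCycle] (x : α) :
    Commute (σ.cycleOf x) σ := by
  ext y
  simp only [mul_apply, cycleOf_apply, sameCycle_apply_right]
  split_ifs <;> rfl

variable [Fintype α] [DecidableEq α]

theorem support_nonempty_iff_ne_one {f : Perm α} :
    f.support.Nonempty ↔ f ≠ 1 := by
  rw [Finset.nonempty_iff_ne_empty, Ne, Ne, support_eq_empty_iff]

theorem cycleOf_cycleOf (σ : Perm α) (x : α) : (σ.cycleOf x).cycleOf x = σ.cycleOf x := by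
  have hcomm : Commute (σ.cycleOf x) ((σ.cycleOf x)⁻¹ * σ) :=
    (Commute.refl _).inv_right.mul_right (commute_cycleOf_self σ x)
  have hfix : ((σ.cycleOf x)⁻¹ * σ) x = x := by
    rw [mul_apply, inv_eq_iff_eq, cycleOf_apply_self]
  conv_rhs => rw [← mul_inv_cancel_left (σ.cycleOf x) σ]
  exact (cycleOf_mul_of_apply_right_eq_self hcomm x hfix).symm

variable (σ : Perm α) (x : α)

def reverseCycleOf : Perm α :=
  (σ.cycleOf x)⁻¹ * (σ.cycleOf x)⁻¹ * σ

theorem reverseCycleOf_apply (y : α) :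
    σ.reverseCycleOf x y = if σ.SameCycle x y then σ⁻¹ y else σ y := by
  by_cases hy : σ.SameCycle x y <;>
    simp [reverseCycleOf, cycleOf_inv, cycleOf_apply, hy]

theorem cycleOf_reverseCycleOf :
    (σ.reverseCycleOf x).cycleOf x = (σ.cycleOf x)⁻¹ := by
  have hcomm : Commute (σ.cycleOf x)⁻¹ ((σ.cycleOf x)⁻¹ * σ) :=
    (Commute.refl _).mul_right (commute_cycleOf_self σ x).inv_left
  have hfix : ((σ.cycleOf x)⁻¹ * σ) x = x := by
    rw [mul_apply, inv_eq_iff_eq, cycleOf_apply_self]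
  rw [reverseCycleOf, mul_assoc, cycleOf_mul_of_apply_right_eq_self hcomm x hfix]
  simp only [cycleOf_inv]
  convert cycleOf_cycleOf σ⁻¹ x

theorem reverseCycleOf_reverseCycleOf :
    (σ.reverseCycleOf x).reverseCycleOf x = σ := by
  rw [reverseCycleOf, cycleOf_reverseCycleOf, reverseCycleOf]
  group

theorem support_mul_self_reverseCycleOf :
    (σ.reverseCycleOf x * σ.reverseCycleOf x).support = (σ * σ).support := by
  ext y
  simp only [mem_support, mul_apply, reverseCycleOf_apply]
  by_cases hy : σ.SameCycle x y
  · have : σ.SameCycle x (σ⁻¹ y) := by simpa using hy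
    simp only [hy, this, if_true]
    rw [Ne, Ne, inv_eq_iff_eq, inv_eq_iff_eq, eq_comm]
  · have : ¬ σ.SameCycle x (σ y) := by simpa using hy
    simp only [hy, this, if_false]

variable {σ x}

theorem reverseCycleOf_ne_self (hx : σ (σ x) ≠ x) : σ.reverseCycleOf x ≠ σ := by
  intro h
  have hx' := DFunLike.congr_fun h x
  rw [reverseCycleOf_apply, if_pos SameCycle.rfl] at hx'
  rw [← hx'] at hx
  exact hx (σ.apply_symm_apply x)

end Equiv.Perm

open Equiv Perm

section

variable {n : ℕ} {σ : Perm (Fin n)}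

theorem cycleReversal_eq_reverseCycleOf (hne : (σ * σ).support.Nonempty) :
    cycleReversal σ = σ.reverseCycleOf ((σ * σ).support.min' hne) := by
  rw [cycleReversal, dif_pos (support_nonempty_iff_ne_one.1 hne)]
  rfl

theorem cycleReversal_mul_self_ne_one (h : σ * σ ≠ 1) :
    cycleReversal σ * cycleReversal σ ≠ 1 := by
  have hne := support_nonempty_iff_ne_one.2 h
  rw [← support_nonempty_iff_ne_one, cycleReversal_eq_reverseCycleOf hne,
    support_mul_self_reverseCycleOf]
  exact hne

theorem cycleReversal_cycleReversal (h : σ * σ ≠ 1) : cycleReversal (cycleReversal σ) = σ := by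
  have hne := support_nonempty_iff_ne_one.2 h
  have hne' := support_nonempty_iff_ne_one.2 (cycleReversal_mul_self_ne_one h)
  rw [cycleReversal_eq_reverseCycleOf hne']
  simp only [cycleReversal_eq_reverseCycleOf hne, support_mul_self_reverseCycleOf,
    reverseCycleOf_reverseCycleOf]

theorem cycleReversal_ne_self (h : σ * σ ≠ 1) : cycleReversal σ ≠ σ := by
  have hne := support_nonempty_iff_ne_one.2 h
  rw [cycleReversal_eq_reverseCycleOf hne]
  exact reverseCycleOf_ne_self (mem_support.1 ((σ * σ).support.min'_mem hne))

end

/-- For every bad permutation `σ` (i.e. `σ ∘ σ ≠ id`) of `{1,…,n}`, the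
cycle-reversal operation satisfies `D (D σ) = σ` and `D σ ≠ σ`, so it pairs up
the bad permutations into 2-element orbits; in particular the number of bad
permutations of `{1,…,n}` is even. -/
theorem cycleReversal_pairs_bad_permutations (n : ℕ) :
    (∀ σ : Equiv.Perm (Fin n), σ * σ ≠ 1 →
      cycleReversal (cycleReversal σ) = σ ∧ cycleReversal σ ≠ σ) ∧
    Even ((Finset.univ.filter fun σ : Equiv.Perm (Fin n) => σ * σ ≠ 1).card) := by
  refine ⟨fun σ h => ⟨cycleReversal_cycleReversal h, cycleReversal_ne_self h⟩, ?_⟩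
  refine Finset.even_card_of_involution cycleReversal ?_ ?_ ?_ <;>
    simp only [Finset.mem_filter_univ]
  exacts [fun σ h => cycleReversal_mul_self_ne_one h, fun σ h => cycleReversal_cycleReversal h,
    fun σ h => cycleReversal_ne_self h]
end

section
/- Let H = (V,E), U ⊆ V with every edge of E projecting onto U with size at most 2 and at least 1, and let s be an extra indeterminate. Define the Tutte matrix T^(s) with rows and columns indexed by U: T^(s)(i,j) = Σ_{e: e∩U = {i,j}, i≠j} v_e for i ≠ j, and T^(s)(i,i) = s·Σ_{e: e∩U = {i}} v_e. Then over a field of characteristic 2, det(T^(s)) = Σ_{M ∈ M} s^{Λ(M)} Π_{e∈M} v_e^{p(e)}, where M ranges over perfect matchings of the projected multigraph (loops allowed, a loop covering only its one vertex), Λ(M) is the number of loop edges in M, p(e) = 1 for loops and p(e) = 2 for non-loop edges. -/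
/-!
In characteristic 2 the signs of the Leibniz expansion disappear, and since the Tutte matrix is
symmetric the terms of `σ` and `σ⁻¹` are equal and cancel, so only involutions survive. For an
involution the product `∏ i, T (σ i) i` splits over the orbits of `σ`: a fixed point `i` gives
`s · ∑ v_e` over the loops at `i`, and a 2-cycle `{i, j}` gives `(∑ v_e)² = ∑ v_e²` (Frobenius).
Expanding the product over the orbits picks one edge per orbit, i.e. a perfect matching whose
blocks are the orbits of `σ`, and every perfect matching arises from exactly one involution.
-/

open scoped Classical
open Finset Equiv Function

theorem Equiv.Perm.involutive_iff_inv_eq_self {α : Type*} (σ : Perm α) :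
    Involutive σ ↔ σ⁻¹ = σ := by
  rw [inv_eq_iff_mul_eq_one, Perm.ext_iff]
  rfl

theorem Matrix.det_eq_sum_involutive_of_charTwo {n R : Type*} [Fintype n] [DecidableEq n]
    [CommRing R] [CharP R 2] (A : Matrix n n R) (hA : A.IsSymm) :
    A.det = ∑ σ ∈ univ.filter (fun σ : Perm n => Involutive σ), ∏ i, A (σ i) i := by
  have sign_smul (σ : Perm n) (x : R) : Perm.sign σ • x = x := by
    rcases Int.units_eq_one_or (Perm.sign σ) with h | h <;>
      simp [h, Units.smul_def, CharTwo.neg_eq]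
  have prod_inv (σ : Perm n) : ∏ i, A (σ⁻¹ i) i = ∏ i, A (σ i) i := by
    rw [← Equiv.prod_comp σ]
    simp only [Perm.coe_inv, symm_apply_apply]
    exact prod_congr rfl fun i _ => hA.apply (σ i) i
  simp only [Matrix.det_apply, sign_smul, Perm.involutive_iff_inv_eq_self]
  rw [← sum_filter_add_sum_filter_not _ (fun σ : Perm n => σ⁻¹ = σ), add_eq_left]
  refine sum_involution (fun σ _ => σ⁻¹) (fun σ _ => ?_) (fun σ hσ _ => ?_) (fun σ hσ => ?_)
    (fun σ _ => inv_inv σ)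
  · rw [prod_inv, CharTwo.add_self_eq_zero]
  · exact (mem_filter.1 hσ).2
  · simpa [eq_comm] using hσ

theorem Finset.prod_sum_fiber_eq_sum_sections {ι κ R : Type*} [CommSemiring R] [DecidableEq ι]
    [DecidableEq κ] (E : Finset ι) (proj : ι → κ) (w : ι → R) (P : Finset κ) :
    ∏ B ∈ P, ∑ e ∈ E with proj e = B, w e =
      ∑ M ∈ E.powerset with Finset.image proj M = P ∧ Set.InjOn proj M, ∏ e ∈ M, w e := by
  rw [prod_sum]
  have mem_pi_iff (f : ∀ B ∈ P, ι) :
      f ∈ P.pi (fun B => E.filter (proj · = B)) ↔ ∀ B hB, f B hB ∈ E ∧ proj (f B hB) = B := by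
    simp only [mem_pi, mem_filter]
  refine sum_bij (fun f _ => P.attach.image fun B => f B.1 B.2) (fun f hf => ?_)
    (fun f₁ hf₁ f₂ hf₂ h => ?_) (fun M hM => ?_) (fun f hf => ?_)
  · rw [mem_pi_iff] at hf
    simp only [mem_filter, mem_powerset, image_image, coe_image]
    refine ⟨fun e he => ?_, ?_, ?_⟩
    · obtain ⟨B, -, rfl⟩ := mem_image.1 he
      exact (hf B.1 B.2).1
    · conv_rhs => rw [← P.attach_image_val]
      exact image_congr fun B _ => (hf B.1 B.2).2
    · rintro - ⟨B, -, rfl⟩ - ⟨B', -, rfl⟩ h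
      simp only [(hf B.1 B.2).2, (hf B'.1 B'.2).2] at h
      simp [h]
  · rw [mem_pi_iff] at hf₁ hf₂
    funext B hB
    obtain ⟨B', -, hB'⟩ := mem_image.1 (h ▸ mem_image_of_mem _ (mem_attach P ⟨B, hB⟩))
    obtain rfl : B' = ⟨B, hB⟩ :=
      Subtype.ext <| (hf₂ B'.1 B'.2).2.symm.trans ((congrArg proj hB').trans (hf₁ B hB).2)
    exact hB'.symm
  · simp only [mem_filter, mem_powerset] at hM
    obtain ⟨hME, rfl, hinj⟩ := hM
    have hsec (B : κ) (hB : B ∈ M.image proj) : ∃ e ∈ M, proj e = B := mem_image.1 hB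
    choose f hfM hfB using hsec
    refine ⟨f, (mem_pi_iff f).2 fun B hB => ⟨hME (hfM B hB), hfB B hB⟩, ?_⟩
    ext e
    refine ⟨fun he => ?_, fun he => ?_⟩
    · obtain ⟨B, -, rfl⟩ := mem_image.1 he
      exact hfM B.1 B.2
    · exact mem_image.2 ⟨⟨proj e, mem_image_of_mem _ he⟩, mem_attach _ _,
        hinj (hfM _ _) he (hfB _ _)⟩
  · rw [mem_pi_iff] at hf
    refine (prod_image fun B _ B' _ h => Subtype.ext ?_).symm
    rw [← (hf B.1 B.2).2, ← (hf B'.1 B'.2).2]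
    exact congrArg proj h

section Involution
variable {α : Type*} [DecidableEq α]

theorem Finset.pair_left_injective (x : α) : Injective fun a : α => ({a, x} : Finset α) := by
  intro a b (h : ({a, x} : Finset α) = {b, x})
  have ha := h ▸ mem_insert_self a {x}
  have hb := h.symm ▸ mem_insert_self b {x}
  simp only [mem_insert, mem_singleton] at ha hb
  grind

theorem Finset.exists_eq_pair_of_mem_of_card_le_two {s : Finset α} {x : α} (hx : x ∈ s)
    (hs : #s ≤ 2) : ∃ y, s = {y, x} := by
  rcases (s.erase x).eq_empty_or_nonempty with h | h
  · refine ⟨x, ?_⟩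
    rw [pair_eq_singleton, ← insert_erase hx, h, insert_empty]
  · obtain ⟨y, hy⟩ : ∃ y, s.erase x = {y} := by
      refine card_eq_one.1 (le_antisymm ?_ h.card_pos)
      rw [card_erase_of_mem hx]
      omega
    rw [← insert_erase hx, hy, pair_comm]
    exact ⟨y, rfl⟩

theorem Function.Involutive.pair_eq_of_mem {σ : α → α} (hσ : Involutive σ) {x y : α}
    (h : x ∈ ({σ y, y} : Finset α)) : ({σ x, x} : Finset α) = {σ y, y} := by
  rcases mem_insert.1 h with rfl | h
  · rw [hσ, pair_comm]
  · rw [mem_singleton.1 h]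

namespace Equiv.Perm
variable [Fintype α]

/-- For an involution these are exactly its orbits. -/
def orbitPairs (σ : Perm α) : Finset (Finset α) := univ.image fun x => {σ x, x}

theorem prod_orbitPairs {M : Type*} [CommMonoid M] {σ : Perm α} (hσ : Involutive σ)
    (f : α → M) : ∏ B ∈ σ.orbitPairs, ∏ i ∈ B, f i = ∏ i, f i := by
  rw [← prod_fiberwise_of_maps_to (g := fun x => ({σ x, x} : Finset α)) (t := σ.orbitPairs)
    fun x _ => mem_image_of_mem _ (mem_univ x)]
  refine prod_congr rfl fun B hB => ?_
  obtain ⟨y, -, rfl⟩ := mem_image.1 hB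
  congr 1
  ext x
  simp only [mem_filter, mem_univ, true_and]
  refine ⟨hσ.pair_eq_of_mem, fun h => ?_⟩
  rw [← h]
  exact mem_insert_of_mem (mem_singleton_self x)

theorem orbitPairs_injOn : Set.InjOn orbitPairs {σ : Perm α | Involutive σ} := by
  intro σ hσ τ hτ h
  ext x
  have hσx : {σ x, x} ∈ τ.orbitPairs := h ▸ mem_image_of_mem _ (mem_univ x)
  obtain ⟨y, -, hy⟩ := mem_image.1 hσx
  have hx : x ∈ ({τ y, y} : Finset α) := by
    rw [hy]
    exact mem_insert_of_mem (mem_singleton_self x)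
  exact pair_left_injective x (hy.symm.trans (hτ.pair_eq_of_mem hx).symm)

end Equiv.Perm
end Involution

section PerfectMatching
variable {α ι : Type*} [DecidableEq α] (proj : ι → Finset α)

/-- Reducible, so that filtering by it uses the same decidability instance as filtering by the
unfolded predicate. -/
abbrev IsPerfectMatching (M : Finset ι) : Prop := ∀ x, #(M.filter (x ∈ proj ·)) = 1

variable {proj}

theorem isPerfectMatching_iff {M : Finset ι} :
    IsPerfectMatching proj M ↔ ∀ x, ∃! e, e ∈ M ∧ x ∈ proj e := by
  simp only [IsPerfectMatching, card_eq_one_iff_existsUnique, mem_filter]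

variable [Fintype α]

theorem isPerfectMatching_iff_injOn {σ : Perm α} (hσ : Involutive σ) {M : Finset ι}
    (hM : M.image proj = σ.orbitPairs) : IsPerfectMatching proj M ↔ Set.InjOn proj M := by
  have pair_of_mem {e} (he : e ∈ M) : ∃ y, proj e = {σ y, y} := by
    obtain ⟨y, -, hy⟩ := mem_image.1 (hM ▸ mem_image_of_mem proj he)
    exact ⟨y, hy.symm⟩
  rw [isPerfectMatching_iff]
  refine ⟨fun h e₁ he₁ e₂ he₂ heq => ?_, fun h x => ?_⟩
  · obtain ⟨y, hy⟩ := pair_of_mem he₁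
    have hy₁ : y ∈ proj e₁ := hy ▸ mem_insert_of_mem (mem_singleton_self y)
    exact (h y).unique ⟨he₁, hy₁⟩ ⟨he₂, heq ▸ hy₁⟩
  · obtain ⟨e, he, hex⟩ := mem_image.1 (hM ▸ mem_image_of_mem _ (mem_univ x) :
      ({σ x, x} : Finset α) ∈ M.image proj)
    refine ⟨e, ⟨he, hex ▸ mem_insert_of_mem (mem_singleton_self x)⟩, fun e' ⟨he', hxe'⟩ => ?_⟩
    obtain ⟨y, hy⟩ := pair_of_mem he'
    have hxy : x ∈ ({σ y, y} : Finset α) := hy ▸ hxe'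
    exact h he' he (by rw [hex, hy, hσ.pair_eq_of_mem hxy])

theorem IsPerfectMatching.exists_involutive_image_eq_orbitPairs {M : Finset ι}
    (hM : IsPerfectMatching proj M) (hcard : ∀ e ∈ M, 1 ≤ #(proj e) ∧ #(proj e) ≤ 2) :
    ∃ σ : Perm α, Involutive σ ∧ M.image proj = σ.orbitPairs := by
  rw [isPerfectMatching_iff] at hM
  choose edge hedge hedge_unique using hM
  have partner (x : α) : ∃ y, proj (edge x) = {y, x} :=
    exists_eq_pair_of_mem_of_card_le_two (hedge x).2 (hcard _ (hedge x).1).2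
  choose σ hσ using partner
  have edge_eq {e x} (he : e ∈ M) (hx : x ∈ proj e) : e = edge x := hedge_unique x e ⟨he, hx⟩
  have hinv : Involutive σ := fun x => by
    have hσx : σ x ∈ proj (edge x) := hσ x ▸ mem_insert_self _ _
    refine pair_left_injective (σ x) (?_ : ({σ (σ x), σ x} : Finset α) = {x, σ x})
    rw [← hσ, ← edge_eq (hedge x).1 hσx, hσ, pair_comm]
  refine ⟨hinv.toPerm σ, hinv, ?_⟩
  ext B
  simp only [Perm.orbitPairs, mem_image, mem_univ, true_and, Involutive.coe_toPerm]
  constructor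
  · rintro ⟨e, he, rfl⟩
    obtain ⟨x, hx⟩ := card_pos.1 (hcard e he).1
    exact ⟨x, by rw [← hσ, ← edge_eq he hx]⟩
  · rintro ⟨x, rfl⟩
    exact ⟨edge x, (hedge x).1, hσ x⟩

theorem sum_involutive_sum_sections_eq_sum_isPerfectMatching {R : Type*} [AddCommMonoid R]
    [DecidablePred (IsPerfectMatching proj)]
    (E : Finset ι) (hproj : ∀ e ∈ E, 1 ≤ #(proj e) ∧ #(proj e) ≤ 2) (f : Finset ι → R) :
    ∑ σ ∈ univ.filter (fun σ : Perm α => Involutive σ),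
        ∑ M ∈ E.powerset with Finset.image proj M = σ.orbitPairs ∧ Set.InjOn proj M, f M =
      ∑ M ∈ E.powerset with IsPerfectMatching proj M, f M := by
  calc _ = ∑ M ∈ E.powerset with IsPerfectMatching proj M,
        ∑ σ ∈ univ.filter (fun σ : Perm α => Involutive σ ∧ M.image proj = σ.orbitPairs), f M := by
        refine sum_comm' fun σ M => ?_
        simp only [mem_filter, mem_univ, true_and, mem_powerset]
        constructor
        · rintro ⟨hσ, hME, hM, hinj⟩
          exact ⟨⟨hσ, hM⟩, hME, (isPerfectMatching_iff_injOn hσ hM).2 hinj⟩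
        · rintro ⟨⟨hσ, hM⟩, hME, hperf⟩
          exact ⟨hσ, hME, hM, (isPerfectMatching_iff_injOn hσ hM).1 hperf⟩
    _ = _ := by
        refine sum_congr rfl fun M hM => ?_
        simp only [mem_filter, mem_powerset] at hM
        obtain ⟨σ, hσ, hMσ⟩ :=
          hM.2.exists_involutive_image_eq_orbitPairs fun e he => hproj e (hM.1 he)
        have : univ.filter (fun τ : Perm α => Involutive τ ∧ M.image proj = τ.orbitPairs) =
            {σ} := by
          refine eq_singleton_iff_unique_mem.2 ⟨by simp [hσ, hMσ], fun τ hτ => ?_⟩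
          simp only [mem_filter, mem_univ, true_and] at hτ
          exact Perm.orbitPairs_injOn hτ.1 hσ (hτ.2.symm.trans hMσ)
        rw [this, sum_singleton]

end PerfectMatching

section TutteMatrix
open MvPolynomial
variable {α ι : Type*} (E : Finset ι) (proj : ι → Finset α) (R : Type*) [CommSemiring R]

noncomputable def tutteMatrix [DecidableEq α] : Matrix α α (MvPolynomial (Option ι) R) :=
  fun i j =>
    if i = j then X none * ∑ e ∈ E with proj e = {i}, X (some e)
    else ∑ e ∈ E with proj e = {i, j}, X (some e)

noncomputable def edgeWeight (e : ι) : MvPolynomial (Option ι) R :=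
  if #(proj e) = 1 then X none * X (some e) else X (some e) ^ 2

variable {E proj R}

theorem prod_edgeWeight (M : Finset ι) :
    ∏ e ∈ M, edgeWeight proj R e =
      X none ^ #(M.filter fun e => #(proj e) = 1) *
        ∏ e ∈ M, X (some e) ^ (if #(proj e) = 1 then 1 else 2) := by
  rw [card_filter, ← prod_pow_eq_pow_sum, ← prod_mul_distrib]
  refine prod_congr rfl fun e _ => ?_
  by_cases h : #(proj e) = 1 <;> simp [edgeWeight, h]

variable [DecidableEq α]

theorem tutteMatrix_isSymm : (tutteMatrix E proj R).IsSymm := by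
  refine Matrix.IsSymm.ext fun i j => ?_
  by_cases h : i = j
  · rw [h]
  · simp only [tutteMatrix, if_neg h, if_neg (Ne.symm h), pair_comm]

theorem prod_pair_tutteMatrix [CharP R 2] {σ : α → α} (hσ : Involutive σ) (j : α) :
    ∏ i ∈ {σ j, j}, tutteMatrix E proj R (σ i) i =
      ∑ e ∈ E with proj e = {σ j, j}, edgeWeight proj R e := by
  by_cases hj : σ j = j
  · simp only [hj, pair_eq_singleton, prod_singleton, tutteMatrix, if_true, mul_sum]
    refine sum_congr rfl fun e he => ?_
    rw [edgeWeight, if_pos (by rw [(mem_filter.1 he).2, card_singleton])]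
  · rw [prod_pair hj, hσ, tutteMatrix_isSymm.apply j (σ j), ← sq, tutteMatrix,
      if_neg (Ne.symm hj), pair_comm, CharTwo.sum_sq]
    refine sum_congr rfl fun e he => ?_
    rw [edgeWeight, if_neg (by rw [(mem_filter.1 he).2, card_pair hj]; omega)]

theorem prod_tutteMatrix_of_involutive [Fintype α] [CharP R 2] {σ : Perm α}
    (hσ : Involutive σ) :
    ∏ i, tutteMatrix E proj R (σ i) i =
      ∏ B ∈ σ.orbitPairs, ∑ e ∈ E with proj e = B, edgeWeight proj R e := by
  rw [← Perm.prod_orbitPairs hσ]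
  refine prod_congr rfl fun B hB => ?_
  obtain ⟨j, -, rfl⟩ := mem_image.1 hB
  exact prod_pair_tutteMatrix hσ j

end TutteMatrix

/-- The vertex set `U` is `Fin m`, `proj e` is `e ∩ U`, and in `MvPolynomial (Option ι) F` the
indeterminate `X (some e)` is `v_e` while `X none` is `s`. -/
theorem tutte_matrix_det_eq_sum_matchings_with_loops
    {ι : Type*} {m : ℕ} (E : Finset ι) (proj : ι → Finset (Fin m))
    (hproj : ∀ e ∈ E, 1 ≤ (proj e).card ∧ (proj e).card ≤ 2)
    (F : Type*) [Field F] [CharP F 2] :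
    (Matrix.det (fun i j : Fin m =>
        if i = j then
          (MvPolynomial.X none : MvPolynomial (Option ι) F) *
            ∑ e ∈ E.filter (fun e => proj e = {i}), MvPolynomial.X (some e)
        else
          ∑ e ∈ E.filter (fun e => proj e = {i, j}),
            (MvPolynomial.X (some e) : MvPolynomial (Option ι) F)))
      = ∑ M ∈ E.powerset.filter (fun M =>
            ∀ x : Fin m, (M.filter (fun e => x ∈ proj e)).card = 1),
          (MvPolynomial.X none : MvPolynomial (Option ι) F)
              ^ ((M.filter fun e => (proj e).card = 1).card) *
            ∏ e ∈ M, (MvPolynomial.X (some e) : MvPolynomial (Option ι) F)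
              ^ (if (proj e).card = 1 then 1 else 2) := by
  calc (tutteMatrix E proj F).det
      = ∑ σ ∈ univ.filter (fun σ : Perm (Fin m) => Involutive σ),
          ∏ B ∈ σ.orbitPairs, ∑ e ∈ E with proj e = B, edgeWeight proj F e := by
        rw [Matrix.det_eq_sum_involutive_of_charTwo _ tutteMatrix_isSymm]
        exact sum_congr rfl fun σ hσ => prod_tutteMatrix_of_involutive (mem_filter.1 hσ).2
    _ = ∑ M ∈ E.powerset with IsPerfectMatching proj M, ∏ e ∈ M, edgeWeight proj F e := by
        simp only [prod_sum_fiber_eq_sum_sections]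
        exact sum_involutive_sum_sections_eq_sum_isPerfectMatching E hproj
          fun M => ∏ e ∈ M, edgeWeight proj F e
    _ = _ := sum_congr rfl fun M _ => prod_edgeWeight M
end

section
/- Let P be a nonzero n-variate polynomial of total degree d over a finite field F, and let r₁,...,rₙ be chosen independently and uniformly at random from F. Then the probability that P(r₁,...,rₙ) = 0 is at most d/|F|. -/
open scoped Classical

/-- Schwartz–Zippel lemma: if `P` is a nonzero `n`-variate polynomial of total
degree `d` over a finite field `F` and `r₁, …, rₙ` are chosen independently
and uniformly at random from `F`, then the probability that
`P(r₁,…,rₙ) = 0` is at most `d / |F|`. -/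
theorem schwartz_zippel {F : Type*} [Field F] [Fintype F] (n : ℕ)
    (P : MvPolynomial (Fin n) F) (hP : P ≠ 0) (d : ℕ)
    (hd : d = P.totalDegree) :
    ((Finset.univ.filter fun r : Fin n → F =>
        MvPolynomial.eval r P = 0).card : ℚ) / (Fintype.card F) ^ n
      ≤ (d : ℚ) / Fintype.card F := by
  subst hd
  have h := MvPolynomial.schwartz_zippel_totalDegree hP Finset.univ
  rw [Fintype.piFinset_univ] at h
  exact_mod_cast h
end

section
/- Let H = (V,E) be a hypergraph, U ⊆ V with every edge meeting U in at most 2 vertices, and X ⊆ V \ U. With f(e) = 2 if |e∩U| = 2 and f(e) = 1 otherwise, the quantity W_{2,f}(H,U,X) (the sum over edge subsets E'' ⊆ E satisfying Avoidance w.r.t. X, |E''| = |V|/k, Coverage of U, and Disjointness on U, of Π_{e∈E''} v_e^{f(e)}) equals Σ_{i=0}^{|U|} Z(|V|/k − ⌊(|U|+i)/2⌋)·M_i, where M_i is the sum over perfect matchings with exactly i loops of the projected multigraph on U restricted to edges disjoint from X of Π_{e∈M} v_e^{p(e)} (p(e)=1 for loops, 2 otherwise), and Z(i) is the i-th elementary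 symmetric polynomial in the variables v_e over edges e disjoint from both X and U. -/
open scoped Classical

theorem matching_count {α ι : Type*} [DecidableEq α] (U : Finset α)
    (edge : ι → Finset α) (M : Finset ι)
    (hproj : ∀ e ∈ M, (edge e ∩ U).card ≤ 2)
    (hne : ∀ e ∈ M, edge e ∩ U ≠ ∅)
    (hcov : ∀ x ∈ U, (M.filter fun e => x ∈ edge e).card = 1) :
    U.card + (M.filter fun e => (edge e ∩ U).card = 1).card = 2 * M.card := by
  classical
  have h1 : ∑ e ∈ M, (edge e ∩ U).card = U.card := by
    calc ∑ e ∈ M, (edge e ∩ U).card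
        = ∑ e ∈ M, ∑ x ∈ U, (if x ∈ edge e then 1 else 0) := by
          refine Finset.sum_congr rfl fun e _ => ?_
          rw [Finset.inter_comm, ← Finset.filter_mem_eq_inter, Finset.card_filter]
      _ = ∑ x ∈ U, ∑ e ∈ M, (if x ∈ edge e then 1 else 0) := Finset.sum_comm
      _ = ∑ x ∈ U, (M.filter fun e => x ∈ edge e).card := by
          refine Finset.sum_congr rfl fun x _ => ?_
          rw [Finset.card_filter]
      _ = ∑ x ∈ U, 1 := Finset.sum_congr rfl fun x hx => by rw [hcov x hx]
      _ = U.card := by simp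
  set i := (M.filter fun e => (edge e ∩ U).card = 1).card with hi
  have hsplit := Finset.sum_filter_add_sum_filter_not M
    (fun e => (edge e ∩ U).card = 1) (fun e => (edge e ∩ U).card)
  have hA : ∑ e ∈ M.filter (fun e => (edge e ∩ U).card = 1), (edge e ∩ U).card = i := by
    rw [hi, Finset.card_eq_sum_ones]
    exact Finset.sum_congr rfl fun e he => (Finset.mem_filter.mp he).2
  have hB : ∑ e ∈ M.filter (fun e => ¬ (edge e ∩ U).card = 1), (edge e ∩ U).card
      = 2 * (M.card - i) := by
    have hcard : (M.filter (fun e => ¬ (edge e ∩ U).card = 1)).card = M.card - i := by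
      have := Finset.card_filter_add_card_filter_not (s := M)
        (p := fun e => (edge e ∩ U).card = 1)
      omega
    have h2 : ∀ e ∈ M.filter (fun e => ¬ (edge e ∩ U).card = 1), (edge e ∩ U).card = 2 := by
      intro e he
      have heM := Finset.mem_filter.mp he
      have h2 := hproj e heM.1
      have h0 : (edge e ∩ U).card ≠ 0 := by
        simpa [Finset.card_eq_zero] using hne e heM.1
      omega
    rw [Finset.sum_congr rfl h2, Finset.sum_const, hcard, smul_eq_mul, Nat.mul_comm]
  have hile : i ≤ M.card := Finset.card_filter_le _ _
  omega

/-- The convolution formula for `W_{2,f}`.  `H = (V,E)` is a `k`-uniform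
hypergraph (edges indexed by `ι`, `edge e ⊆ V` of size `k`), `U ⊆ V` with every
edge meeting `U` in at most 2 vertices, and `X ⊆ V \ U`.  With
`f e = 2` if `|edge e ∩ U| = 2` and `f e = 1` otherwise, the quantity
`W_{2,f}(H,U,X)` — the sum over `E'' ⊆ E` satisfying Avoidance w.r.t. `X`,
Cardinality `|E''| = |V|/k`, Coverage of `U`, and Disjointness on `U`, of
`∏_{e∈E''} v_e^{f e}` — equals
`∑_{i=0}^{|U|} Z(|V|/k − ⌊(|U|+i)/2⌋) · M_i`, where `M_i` sums
`∏_{e∈M} v_e^{p e}` (`p e = 1` for loops, `2` otherwise) over perfect matchings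
`M` with exactly `i` loops of the multigraph projected on `U` restricted to
edges disjoint from `X`, and `Z j` is the `j`-th elementary symmetric
polynomial in the variables of the edges disjoint from both `X` and `U`
(taken to be `0` when the argument `|V|/k − ⌊(|U|+i)/2⌋` would be negative). -/
theorem W_eq_convolution_of_matchings
    {α ι : Type*} [DecidableEq α] (V U : Finset α) (hUV : U ⊆ V)
    (E : Finset ι) (edge : ι → Finset α) (k : ℕ) (hk : 0 < k)
    (huniform : ∀ e ∈ E, (edge e).card = k ∧ edge e ⊆ V)
    (hdvd : k ∣ V.card)
    (hproj : ∀ e ∈ E, (edge e ∩ U).card ≤ 2)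
    (X : Finset α) (hX : X ⊆ V \ U)
    (F : Type*) [Field F] [CharP F 2] :
    (∑ E'' ∈ E.powerset.filter (fun E'' =>
        (∀ e ∈ E'', Disjoint (edge e) X) ∧               -- Avoidance
        E''.card = V.card / k ∧                           -- Cardinality
        U ⊆ E''.biUnion edge ∧                            -- Coverage
        (∀ e₁ ∈ E'', ∀ e₂ ∈ E'', e₁ ≠ e₂ →
          Disjoint (edge e₁ ∩ U) (edge e₂ ∩ U))),         -- Disjointness
      ∏ e ∈ E'', (MvPolynomial.X e : MvPolynomial ι F)
        ^ (if (edge e ∩ U).card = 2 then 2 else 1))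
    = ∑ i ∈ Finset.range (U.card + 1),
        (if (U.card + i) / 2 ≤ V.card / k then
          -- Z (|V|/k − ⌊(|U|+i)/2⌋)
          ∑ S ∈ Finset.powersetCard (V.card / k - (U.card + i) / 2)
              (E.filter fun e => Disjoint (edge e) X ∧ edge e ∩ U = ∅),
            ∏ e ∈ S, (MvPolynomial.X e : MvPolynomial ι F)
        else 0)
        *
        -- M_i
        (∑ M ∈ E.powerset.filter (fun M =>
            (∀ e ∈ M, Disjoint (edge e) X) ∧
            (∀ e ∈ M, edge e ∩ U ≠ ∅) ∧
            (∀ x ∈ U, (M.filter fun e => x ∈ edge e).card = 1) ∧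
            (M.filter fun e => (edge e ∩ U).card = 1).card = i),
          ∏ e ∈ M, (MvPolynomial.X e : MvPolynomial ι F)
            ^ (if (edge e ∩ U).card = 1 then 1 else 2)) := by
  classical
  set n := V.card / k with hn
  set A : Finset ι := E.filter (fun e => Disjoint (edge e) X ∧ edge e ∩ U = ∅) with hA
  set P : Finset (Finset ι × Finset ι) := (E.powerset ×ˢ E.powerset).filter
    (fun p => (∀ e ∈ p.1, Disjoint (edge e) X) ∧ (∀ e ∈ p.1, edge e ∩ U ≠ ∅) ∧
      (∀ x ∈ U, (p.1.filter fun e => x ∈ edge e).card = 1) ∧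
      p.1.card ≤ n ∧ p.2 ⊆ A ∧ p.2.card = n - p.1.card) with hP
  -- membership in P unfolded
  have hPmem : ∀ p : Finset ι × Finset ι, p ∈ P ↔
      p.1 ⊆ E ∧ (∀ e ∈ p.1, Disjoint (edge e) X) ∧ (∀ e ∈ p.1, edge e ∩ U ≠ ∅) ∧
      (∀ x ∈ U, (p.1.filter fun e => x ∈ edge e).card = 1) ∧
      p.1.card ≤ n ∧ p.2 ⊆ A ∧ p.2.card = n - p.1.card := by
    intro p
    rw [hP, Finset.mem_filter, Finset.mem_product, Finset.mem_powerset, Finset.mem_powerset]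
    constructor
    · rintro ⟨⟨h1, h2⟩, h3⟩; exact ⟨h1, h3⟩
    · rintro ⟨h1, h2, h3, h4, h5, h6, h7⟩
      exact ⟨⟨h1, h6.trans (Finset.filter_subset _ _)⟩, h2, h3, h4, h5, h6, h7⟩
  -- Step 1 : LHS = sum over pairs
  have key1 : (∑ E'' ∈ E.powerset.filter (fun E'' =>
        (∀ e ∈ E'', Disjoint (edge e) X) ∧
        E''.card = n ∧
        U ⊆ E''.biUnion edge ∧
        (∀ e₁ ∈ E'', ∀ e₂ ∈ E'', e₁ ≠ e₂ →
          Disjoint (edge e₁ ∩ U) (edge e₂ ∩ U))),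
      ∏ e ∈ E'', (MvPolynomial.X e : MvPolynomial ι F)
        ^ (if (edge e ∩ U).card = 2 then 2 else 1))
    = ∑ p ∈ P,
        (∏ e ∈ p.1, (MvPolynomial.X e : MvPolynomial ι F)
          ^ (if (edge e ∩ U).card = 1 then 1 else 2)) *
        ∏ e ∈ p.2, (MvPolynomial.X e : MvPolynomial ι F) := by
    have hAE : ∀ e ∈ A, e ∈ E ∧ Disjoint (edge e) X ∧ edge e ∩ U = ∅ := by
      intro e he
      rw [hA, Finset.mem_filter] at he
      exact ⟨he.1, he.2.1, he.2.2⟩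
    refine Finset.sum_nbij' (fun E'' => (E''.filter (fun e => edge e ∩ U ≠ ∅),
        E''.filter (fun e => ¬ edge e ∩ U ≠ ∅))) (fun p => p.1 ∪ p.2) ?_ ?_ ?_ ?_ ?_
    · -- maps into P
      intro E'' hE''
      rw [Finset.mem_filter, Finset.mem_powerset] at hE''
      obtain ⟨hsub, havoid, hcard, hcover, hdisj⟩ := hE''
      refine (hPmem _).mpr ⟨(Finset.filter_subset _ _).trans hsub, ?_, ?_, ?_, ?_, ?_, ?_⟩
      · exact fun e he => havoid e (Finset.mem_filter.mp he).1
      · exact fun e he => (Finset.mem_filter.mp he).2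
      · intro x hx
        obtain ⟨e₀, he₀, hxe₀⟩ := Finset.mem_biUnion.mp (hcover hx)
        have hsing : (E''.filter (fun e => edge e ∩ U ≠ ∅)).filter (fun e => x ∈ edge e)
            = {e₀} := by
          ext f
          simp only [Finset.mem_filter, Finset.mem_singleton]
          constructor
          · rintro ⟨⟨hfE, -⟩, hxf⟩
            by_contra hne'
            exact (Finset.disjoint_left.mp (hdisj f hfE e₀ he₀ hne')
              (Finset.mem_inter.mpr ⟨hxf, hx⟩)) (Finset.mem_inter.mpr ⟨hxe₀, hx⟩)
          · rintro rfl
            exact ⟨⟨he₀, Finset.ne_empty_of_mem (Finset.mem_inter.mpr ⟨hxe₀, hx⟩)⟩, hxe₀⟩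
        rw [hsing, Finset.card_singleton]
      · exact (Finset.card_filter_le _ _).trans hcard.le
      · intro e he
        have he' := Finset.mem_filter.mp he
        rw [hA, Finset.mem_filter]
        exact ⟨hsub he'.1, havoid e he'.1, not_not.mp he'.2⟩
      · show (E''.filter (fun e => ¬ edge e ∩ U ≠ ∅)).card
            = n - (E''.filter (fun e => edge e ∩ U ≠ ∅)).card
        have := Finset.card_filter_add_card_filter_not (s := E'')
          (p := fun e => edge e ∩ U ≠ ∅)
        omega
    · -- maps back
      intro p hp
      obtain ⟨h1, h2, h3, h4, h5, h6, h7⟩ := (hPmem p).mp hp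
      have hd : Disjoint p.1 p.2 := Finset.disjoint_left.mpr fun e he1 he2 =>
        (h3 e he1) ((hAE e (h6 he2)).2.2)
      rw [Finset.mem_filter, Finset.mem_powerset]
      refine ⟨Finset.union_subset h1 (fun e he => (hAE e (h6 he)).1), ?_, ?_, ?_, ?_⟩
      · intro e he
        rcases Finset.mem_union.mp he with he' | he'
        · exact h2 e he'
        · exact (hAE e (h6 he')).2.1
      · rw [Finset.card_union_of_disjoint hd]
        omega
      · intro x hx
        obtain ⟨e, he⟩ := Finset.card_eq_one.mp (h4 x hx)
        have heM : e ∈ p.1.filter (fun e => x ∈ edge e) := he ▸ Finset.mem_singleton_self e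
        have heM' := Finset.mem_filter.mp heM
        exact Finset.mem_biUnion.mpr ⟨e, Finset.mem_union_left _ heM'.1, heM'.2⟩
      · intro e₁ he₁ e₂ he₂ hne'
        rcases Finset.mem_union.mp he₁ with h | h
        · rcases Finset.mem_union.mp he₂ with h' | h'
          · by_contra hcon
            obtain ⟨x, hx1, hx2⟩ := Finset.not_disjoint_iff.mp hcon
            have hxU : x ∈ U := (Finset.mem_inter.mp hx1).2
            obtain ⟨a, ha⟩ := Finset.card_eq_one.mp (h4 x hxU)
            have hm1 : e₁ ∈ p.1.filter (fun e => x ∈ edge e) :=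
              Finset.mem_filter.mpr ⟨h, (Finset.mem_inter.mp hx1).1⟩
            have hm2 : e₂ ∈ p.1.filter (fun e => x ∈ edge e) :=
              Finset.mem_filter.mpr ⟨h', (Finset.mem_inter.mp hx2).1⟩
            rw [ha, Finset.mem_singleton] at hm1 hm2
            exact hne' (hm1.trans hm2.symm)
          · rw [(hAE e₂ (h6 h')).2.2]
            exact Finset.disjoint_empty_right _
        · rw [(hAE e₁ (h6 h)).2.2]
          exact Finset.disjoint_empty_left _
    · -- left inverse
      intro E'' hE''
      exact Finset.filter_union_filter_not_eq _ E''
    · -- right inverse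
      intro p hp
      obtain ⟨h1, h2, h3, h4, h5, h6, h7⟩ := (hPmem p).mp hp
      refine Prod.ext ?_ ?_
      · show (p.1 ∪ p.2).filter (fun e => edge e ∩ U ≠ ∅) = p.1
        rw [Finset.filter_union, Finset.filter_true_of_mem h3,
          Finset.filter_false_of_mem (fun e he => not_not_intro ((hAE e (h6 he)).2.2)),
          Finset.union_empty]
      · show (p.1 ∪ p.2).filter (fun e => ¬ edge e ∩ U ≠ ∅) = p.2
        rw [Finset.filter_union,
          Finset.filter_false_of_mem (fun e he => not_not_intro (h3 e he)),
          Finset.filter_true_of_mem (fun e he => not_not_intro ((hAE e (h6 he)).2.2)),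
          Finset.empty_union]
    · -- values agree
      intro E'' hE''
      rw [Finset.mem_filter, Finset.mem_powerset] at hE''
      obtain ⟨hsub, havoid, hcard, hcover, hdisj⟩ := hE''
      rw [← Finset.prod_filter_mul_prod_filter_not E'' (fun e => edge e ∩ U ≠ ∅)]
      congr 1
      · refine Finset.prod_congr rfl fun e he => ?_
        have he' := Finset.mem_filter.mp he
        have h2 := hproj e (hsub he'.1)
        have h0 : (edge e ∩ U).card ≠ 0 := by
          simpa [Finset.card_eq_zero] using he'.2
        have : (edge e ∩ U).card = 1 ∨ (edge e ∩ U).card = 2 := by omega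
        rcases this with h | h <;> simp [h]
      · refine Finset.prod_congr rfl fun e he => ?_
        have h0 := not_not.mp (Finset.mem_filter.mp he).2
        rw [h0]
        simp
  rw [key1]
  -- counting fact for elements of P
  have count : ∀ p : Finset ι × Finset ι, p ∈ P →
      U.card + (p.1.filter fun e => (edge e ∩ U).card = 1).card = 2 * p.1.card := by
    intro p hp
    obtain ⟨h1, h2, h3, h4, -⟩ := (hPmem p).mp hp
    exact matching_count U edge p.1 (fun e he => hproj e (h1 he)) h3 h4
  -- Step 2 : fiber the pair-sum by the number of loops
  have key2 := Finset.sum_fiberwise_of_maps_to (g := fun p : Finset ι × Finset ι =>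
      (p.1.filter fun e => (edge e ∩ U).card = 1).card)
    (t := Finset.range (U.card + 1)) (s := P)
    (fun p hp => by
      show (p.1.filter fun e => (edge e ∩ U).card = 1).card ∈ Finset.range (U.card + 1)
      have hc := count p hp
      have hle : (p.1.filter fun e => (edge e ∩ U).card = 1).card ≤ p.1.card :=
        Finset.card_filter_le _ _
      rw [Finset.mem_range]; omega)
    (fun p => (∏ e ∈ p.1, (MvPolynomial.X e : MvPolynomial ι F)
          ^ (if (edge e ∩ U).card = 1 then 1 else 2)) *
        ∏ e ∈ p.2, (MvPolynomial.X e : MvPolynomial ι F))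
  rw [← key2]
  refine Finset.sum_congr rfl fun i _ => ?_
  by_cases hcond : (U.card + i) / 2 ≤ n
  · rw [if_pos hcond]
    have hset : P.filter (fun p => (p.1.filter fun e => (edge e ∩ U).card = 1).card = i)
        = (E.powerset.filter (fun M =>
            (∀ e ∈ M, Disjoint (edge e) X) ∧
            (∀ e ∈ M, edge e ∩ U ≠ ∅) ∧
            (∀ x ∈ U, (M.filter fun e => x ∈ edge e).card = 1) ∧
            (M.filter fun e => (edge e ∩ U).card = 1).card = i)) ×ˢ
          (Finset.powersetCard (n - (U.card + i) / 2) A) := by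
      ext p
      simp only [Finset.mem_filter, Finset.mem_product, Finset.mem_powerset,
        Finset.mem_powersetCard, hPmem]
      constructor
      · rintro ⟨⟨h1, h2, h3, h4, h5, h6, h7⟩, h8⟩
        have hc : U.card + i = 2 * p.1.card := by
          have := matching_count U edge p.1 (fun e he => hproj e (h1 he)) h3 h4
          omega
        exact ⟨⟨h1, h2, h3, h4, h8⟩, h6, by omega⟩
      · rintro ⟨⟨h1, h2, h3, h4, h5⟩, h6, h7⟩
        have hc : U.card + i = 2 * p.1.card := by
          have := matching_count U edge p.1 (fun e he => hproj e (h1 he)) h3 h4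
          omega
        exact ⟨⟨h1, h2, h3, h4, by omega, h6, by omega⟩, h5⟩
    rw [hset, Finset.sum_product, Finset.sum_mul_sum, Finset.sum_comm]
    exact Finset.sum_congr rfl fun M _ => Finset.sum_congr rfl fun S _ => mul_comm _ _
  · rw [if_neg hcond, zero_mul]
    have hempty : P.filter (fun p => (p.1.filter fun e => (edge e ∩ U).card = 1).card = i)
        = ∅ := by
      rw [Finset.filter_eq_empty_iff]
      intro p hp hip
      have hc := count p hp
      have hle := ((hPmem p).mp hp).2.2.2.2.1
      omega
    rw [hempty, Finset.sum_empty]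
end

section
/- Let S be a partition of an n-element set V into n/k blocks of size k, and let U be a uniformly random subset of V of size tn. The probability that every block of S meets U in at most 2 elements is at least [C(N, τ₁₂N)·C(τ₁₂N, τ₂N)·k^{(τ₁₂−τ₂)N}·(C(k,2))^{τ₂N}] / C(kN, tn], for any nonnegative integers τ₁₂N ≥ τ₂N with (τ₁₂ + τ₂)N = tn, where N = n/k; in particular it is at least C(N,τ₁₂N)·C(τ₁₂N,τ₂N)·k^{τ₁₂N}·(k−1)^{τ₂N} / (2^{τ₂N}·C(kN,(τ₁₂+τ₂)N)). -/
open scoped Classical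

/-- Counting good projections.  Let `S` be a partition of an `n = kN`-element
set `V` into `N` blocks of size `k`, and let `U` be a uniformly random subset
of `V` of size `tn = (τ₁₂ + τ₂)N`; here `a = τ₁₂N ≥ b = τ₂N` are nonnegative
integers with `a ≤ N` and `a + b = tn`.  The probability that every block of
`S` meets `U` in at most 2 elements is at least
`C(N,a)·C(a,b)·k^(a−b)·C(k,2)^b / C(kN, tn)`, and in particular at least
`C(N,a)·C(a,b)·k^a·(k−1)^b / (2^b·C(kN, tn))`. -/
theorem prob_all_blocks_meet_in_at_most_two
    {α : Type*} [DecidableEq α] (V : Finset α) (S : Finset (Finset α))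
    (k N : ℕ) (hk : 0 < k)
    (hblocks : ∀ B ∈ S, B.card = k)
    (hdisj : ∀ B₁ ∈ S, ∀ B₂ ∈ S, B₁ ≠ B₂ → Disjoint B₁ B₂)
    (hunion : S.biUnion id = V)
    (hS : S.card = N) (hV : V.card = k * N)
    (a b : ℕ) (hba : b ≤ a) (haN : a ≤ N) (t : ℕ) (ht : t = a + b) :
    (((V.powersetCard t).filter fun U => ∀ B ∈ S, (B ∩ U).card ≤ 2).card : ℚ)
        / ((k * N).choose t)
      ≥ ((N.choose a * a.choose b * k ^ (a - b) * (k.choose 2) ^ b : ℕ) : ℚ)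
        / ((k * N).choose t) ∧
    (((V.powersetCard t).filter fun U => ∀ B ∈ S, (B ∩ U).card ≤ 2).card : ℚ)
        / ((k * N).choose t)
      ≥ ((N.choose a * a.choose b * k ^ a * (k - 1) ^ b : ℕ) : ℚ)
        / ((2 ^ b * (k * N).choose t : ℕ) : ℚ) := by
  classical
  set G := (V.powersetCard t).filter (fun U => ∀ B ∈ S, (B ∩ U).card ≤ 2) with hGdef
  set D := (S.powersetCard a).sigma (fun A =>
      (A.powersetCard b).sigma (fun B =>
        A.pi (fun C => if C ∈ B then C.powersetCard 2 else C.powersetCard 1))) with hDdef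
  let F : (Σ A : Finset (Finset α), Σ _B : Finset (Finset α), ∀ C ∈ A, Finset α) → Finset α :=
    fun d => d.1.attach.biUnion (fun C => d.2.2 C.1 C.2)
  -- basic facts about members of D
  have hmem : ∀ d ∈ D, d.1 ⊆ S ∧ d.1.card = a ∧ d.2.1 ⊆ d.1 ∧ d.2.1.card = b ∧
      (∀ C (hC : C ∈ d.1), d.2.2 C hC ⊆ C) ∧
      (∀ C (hC : C ∈ d.1), (d.2.2 C hC).card = if C ∈ d.2.1 then 2 else 1) := by
    rintro ⟨A, B, σ⟩ hd
    simp only [hDdef, Finset.mem_sigma, Finset.mem_powersetCard, Finset.mem_pi] at hd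
    obtain ⟨⟨hAS, hAa⟩, ⟨hBA, hBb⟩, hσ⟩ := hd
    refine ⟨hAS, hAa, hBA, hBb, ?_, ?_⟩ <;> intro C hC <;> have h := hσ C hC
    · by_cases hCB : C ∈ B
      · rw [if_pos hCB] at h; exact (Finset.mem_powersetCard.mp h).1
      · rw [if_neg hCB] at h; exact (Finset.mem_powersetCard.mp h).1
    · by_cases hCB : C ∈ B
      · rw [if_pos hCB] at h; rw [if_pos hCB]; exact (Finset.mem_powersetCard.mp h).2
      · rw [if_neg hCB] at h; rw [if_neg hCB]; exact (Finset.mem_powersetCard.mp h).2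
  -- intersections with blocks
  have hinter : ∀ d ∈ D, (∀ C (hC : C ∈ d.1), C ∩ F d = d.2.2 C hC) ∧
      (∀ C ∈ S, C ∉ d.1 → C ∩ F d = ∅) := by
    rintro ⟨A, B, σ⟩ hd
    obtain ⟨hAS, hAa, hBA, hBb, hsub, hcard⟩ := hmem _ hd
    constructor
    · intro C hC
      ext x
      simp only [Finset.mem_inter, F, Finset.mem_biUnion, Finset.mem_attach, true_and,
        Subtype.exists]
      constructor
      · rintro ⟨hxC, C', hC', hx⟩
        rcases eq_or_ne C' C with rfl | hne
        · exact hx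
        · exact absurd hxC
            (Finset.disjoint_left.mp (hdisj C' (hAS hC') C (hAS hC) hne) (hsub C' hC' hx))
      · intro hx
        exact ⟨hsub C hC hx, C, hC, hx⟩
    · intro C hCS hCA
      rw [Finset.eq_empty_iff_forall_notMem]
      intro x hx
      obtain ⟨hxC, hxU⟩ := Finset.mem_inter.mp hx
      simp only [F, Finset.mem_biUnion, Finset.mem_attach, true_and, Subtype.exists] at hxU
      obtain ⟨C', hC', hx'⟩ := hxU
      have hne : C ≠ C' := by rintro rfl; exact hCA hC'
      exact Finset.disjoint_left.mp (hdisj C hCS C' (hAS hC') hne) hxC (hsub C' hC' hx')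
  -- the image has the right cardinality
  have hcardF : ∀ d ∈ D, (F d).card = t := by
    rintro ⟨A, B, σ⟩ hd
    obtain ⟨hAS, hAa, hBA, hBb, hsub, hcard⟩ := hmem _ hd
    have hdisj' : ∀ C ∈ A.attach, ∀ C' ∈ A.attach, C ≠ C' →
        Disjoint (σ C.1 C.2) (σ C'.1 C'.2) := by
      intro C _ C' _ hne
      have hne' : C.1 ≠ C'.1 := fun h => hne (Subtype.ext h)
      exact (hdisj C.1 (hAS C.2) C'.1 (hAS C'.2) hne').mono (hsub _ _) (hsub _ _)
    show (A.attach.biUnion fun C => σ C.1 C.2).card = t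
    rw [Finset.card_biUnion hdisj']
    have hcg : ∀ C ∈ A.attach, (σ C.1 C.2).card
        = (fun C => if C ∈ B then 2 else 1) C.1 := fun C _ => hcard C.1 C.2
    rw [Finset.sum_congr rfl hcg, Finset.sum_attach A (fun C => if C ∈ B then 2 else 1),
      Finset.sum_ite, Finset.sum_const, Finset.sum_const, smul_eq_mul, smul_eq_mul]
    have h1 : A.filter (· ∈ B) = B := by
      rw [Finset.filter_mem_eq_inter, Finset.inter_eq_right.mpr hBA]
    have h2 : A.filter (fun x => x ∉ B) = A \ B := (Finset.sdiff_eq_filter A B).symm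
    rw [h1, h2, hBb, Finset.card_sdiff_of_subset hBA, hAa, hBb]
    omega
  -- F maps into G
  have hmaps : ∀ d ∈ D, F d ∈ G := by
    intro d hd
    obtain ⟨hAS, hAa, hBA, hBb, hsub, hcard⟩ := hmem _ hd
    obtain ⟨hi1, hi2⟩ := hinter _ hd
    rw [hGdef, Finset.mem_filter, Finset.mem_powersetCard]
    refine ⟨⟨?_, hcardF _ hd⟩, ?_⟩
    · intro x hx
      simp only [F, Finset.mem_biUnion, Finset.mem_attach, true_and, Subtype.exists] at hx
      obtain ⟨C', hC', hx'⟩ := hx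
      rw [← hunion]
      exact Finset.mem_biUnion.mpr ⟨C', hAS hC', hsub C' hC' hx'⟩
    · intro Blk hBlk
      by_cases hBA' : Blk ∈ d.1
      · rw [hi1 Blk hBA', hcard Blk hBA']
        split <;> omega
      · rw [hi2 Blk hBlk hBA']
        simp
  -- reconstructing the data from the union
  have hAfromU : ∀ d ∈ D, d.1 = S.filter fun C => (C ∩ F d).Nonempty := by
    intro d hd
    obtain ⟨hAS, hAa, hBA, hBb, hsub, hcard⟩ := hmem _ hd
    obtain ⟨hi1, hi2⟩ := hinter _ hd
    ext C
    simp only [Finset.mem_filter]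
    constructor
    · intro hC
      refine ⟨hAS hC, ?_⟩
      rw [hi1 C hC, ← Finset.card_pos, hcard C hC]
      split <;> omega
    · rintro ⟨hCS, hne⟩
      by_contra hC
      rw [hi2 C hCS hC] at hne
      exact Finset.not_nonempty_empty hne
  have hBfromU : ∀ d ∈ D, d.2.1 = S.filter fun C => (C ∩ F d).card = 2 := by
    intro d hd
    obtain ⟨hAS, hAa, hBA, hBb, hsub, hcard⟩ := hmem _ hd
    obtain ⟨hi1, hi2⟩ := hinter _ hd
    ext C
    simp only [Finset.mem_filter]
    constructor
    · intro hC
      have hCA := hBA hC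
      refine ⟨hAS hCA, ?_⟩
      rw [hi1 C hCA, hcard C hCA, if_pos hC]
    · rintro ⟨hCS, h2⟩
      by_cases hCA : C ∈ d.1
      · rw [hi1 C hCA, hcard C hCA] at h2
        by_contra hCB
        rw [if_neg hCB] at h2
        omega
      · rw [hi2 C hCS hCA] at h2
        simp at h2
  -- injectivity
  have hinj : Set.InjOn F ↑D := by
    rintro ⟨A, B, σ⟩ hd ⟨A', B', σ'⟩ hd' hFF
    simp only [Finset.mem_coe] at hd hd'
    have hAA' : A = A' := by
      have e1 := hAfromU _ hd
      have e2 := hAfromU _ hd'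
      simp only at e1 e2
      rw [e1, e2, hFF]
    subst hAA'
    have hBB' : B = B' := by
      have e1 := hBfromU _ hd
      have e2 := hBfromU _ hd'
      simp only at e1 e2
      rw [e1, e2, hFF]
    subst hBB'
    have hσσ' : σ = σ' := by
      funext C hC
      have e1 := (hinter _ hd).1 C hC
      have e2 := (hinter _ hd').1 C hC
      simp only at e1 e2
      rw [← e1, ← e2, hFF]
    subst hσσ'
    rfl
  -- cardinality of D
  have hDcard : D.card = N.choose a * a.choose b * k ^ (a - b) * k.choose 2 ^ b := by
    have h1 : ∀ A ∈ S.powersetCard a, ∀ B ∈ A.powersetCard b,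
        (A.pi fun C => if C ∈ B then C.powersetCard 2 else C.powersetCard 1).card
          = k ^ (a - b) * k.choose 2 ^ b := by
      intro A hA B hB
      obtain ⟨hAS, hAa⟩ := Finset.mem_powersetCard.mp hA
      obtain ⟨hBA, hBb⟩ := Finset.mem_powersetCard.mp hB
      rw [Finset.card_pi]
      have hterm : ∀ C ∈ A, (if C ∈ B then C.powersetCard 2 else C.powersetCard 1).card
          = if C ∈ B then k.choose 2 else k := by
        intro C hC
        have hCk : C.card = k := hblocks C (hAS hC)
        by_cases h : C ∈ B
        · simp [h, Finset.card_powersetCard, hCk]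
        · simp [h, Finset.card_powersetCard, hCk]
      rw [Finset.prod_congr rfl hterm, Finset.prod_ite, Finset.prod_const, Finset.prod_const]
      have e1 : A.filter (· ∈ B) = B := by
        rw [Finset.filter_mem_eq_inter, Finset.inter_eq_right.mpr hBA]
      have e2 : A.filter (fun x => x ∉ B) = A \ B := (Finset.sdiff_eq_filter A B).symm
      rw [e1, e2, hBb, Finset.card_sdiff_of_subset hBA, hAa, hBb, mul_comm]
    have h2 : ∀ A ∈ S.powersetCard a,
        ((A.powersetCard b).sigma fun B => A.pi fun C =>
            if C ∈ B then C.powersetCard 2 else C.powersetCard 1).card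
          = a.choose b * (k ^ (a - b) * k.choose 2 ^ b) := by
      intro A hA
      obtain ⟨hAS, hAa⟩ := Finset.mem_powersetCard.mp hA
      rw [Finset.card_sigma, Finset.sum_congr rfl (h1 A hA), Finset.sum_const,
        Finset.card_powersetCard, hAa, smul_eq_mul]
    rw [hDdef, Finset.card_sigma, Finset.sum_congr rfl h2, Finset.sum_const,
      Finset.card_powersetCard, hS, smul_eq_mul]
    ring
  -- the key counting bound
  have key : N.choose a * a.choose b * k ^ (a - b) * k.choose 2 ^ b ≤ G.card := by
    rw [← hDcard]
    exact Finset.card_le_card_of_injOn F hmaps hinj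
  have keyQ : ((N.choose a * a.choose b * k ^ (a - b) * k.choose 2 ^ b : ℕ) : ℚ)
      ≤ (G.card : ℚ) := Nat.cast_le.mpr key
  have main1 : (G.card : ℚ) / ((k * N).choose t)
      ≥ ((N.choose a * a.choose b * k ^ (a - b) * (k.choose 2) ^ b : ℕ) : ℚ)
        / ((k * N).choose t) := by
    rcases Nat.eq_zero_or_pos ((k * N).choose t) with h0 | hpos
    · rw [h0]; simp
    · have hc : (0 : ℚ) < ((k * N).choose t : ℚ) := by exact_mod_cast hpos
      gcongr
  refine ⟨main1, ?_⟩
  have hev : 2 ∣ k * (k - 1) := by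
    have h := Nat.even_mul_succ_self (k - 1)
    rw [Nat.sub_add_cancel hk] at h
    rw [mul_comm]
    exact h.two_dvd
  have h2c : k.choose 2 * 2 = k * (k - 1) := by
    rw [Nat.choose_two_right, Nat.div_mul_cancel hev]
  have hka : k ^ a = k ^ (a - b) * k ^ b := by
    rw [← pow_add, Nat.sub_add_cancel hba]
  have hnum2 : N.choose a * a.choose b * k ^ a * (k - 1) ^ b
      = (N.choose a * a.choose b * k ^ (a - b) * k.choose 2 ^ b) * 2 ^ b := by
    calc N.choose a * a.choose b * k ^ a * (k - 1) ^ b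
        = N.choose a * a.choose b * k ^ (a - b) * (k ^ b * (k - 1) ^ b) := by
          rw [hka]; ring
      _ = N.choose a * a.choose b * k ^ (a - b) * (k * (k - 1)) ^ b := by
          rw [mul_pow]
      _ = N.choose a * a.choose b * k ^ (a - b) * (k.choose 2 * 2) ^ b := by
          rw [h2c]
      _ = _ := by rw [mul_pow]; ring
  have heq : ((N.choose a * a.choose b * k ^ a * (k - 1) ^ b : ℕ) : ℚ)
      / ((2 ^ b * (k * N).choose t : ℕ) : ℚ)
      = ((N.choose a * a.choose b * k ^ (a - b) * (k.choose 2) ^ b : ℕ) : ℚ)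
        / ((k * N).choose t) := by
    rw [hnum2]
    push_cast
    rw [mul_comm ((2 : ℚ) ^ b) (((k * N).choose t : ℚ))]
    exact mul_div_mul_right _ _ (by positivity)
  rw [heq]
  exact main1
end

section
/- For any set M of edges (2-element and 1-element subsets of U) forming a perfect matching with loops of a multigraph on U, and any fixed enumeration, the number of directed perfect matchings (sequences assigning a directed edge (i,σ(i)) to each vertex i, with σ the involution of M) that are 'bad' — i.e., contain some vertex j with e_j ≠ e_{σ(j)} — is even: the swap operation R_σ exchanging e_j and e_{σ(j)} at the least bad j is a fixed-point-free involution on bad directed matchings. -/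
open scoped Classical

/-- The swap operation `R_σ`: given a family `d` assigning an edge to each
vertex, exchange `d j` and `d (σ j)` where `j` is the least vertex with
`d j ≠ d (σ j)` (families with `d i = d (σ i)` everywhere are left fixed). -/
noncomputable def swapAtLeastBad {U ι : Type*} [Fintype U] [LinearOrder U]
    (σ : Equiv.Perm U) (d : U → ι) : U → ι :=
  if h : ∃ j, d j ≠ d (σ j) then
    d ∘ Equiv.swap
      ((Finset.univ.filter fun j => d j ≠ d (σ j)).min' (by
        obtain ⟨j, hj⟩ := h
        exact ⟨j, Finset.mem_filter.mpr ⟨Finset.mem_univ _, hj⟩⟩))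
      (σ ((Finset.univ.filter fun j => d j ≠ d (σ j)).min' (by
        obtain ⟨j, hj⟩ := h
        exact ⟨j, Finset.mem_filter.mpr ⟨Finset.mem_univ _, hj⟩⟩)))
  else d

/-- Let `σ` be an involution of a finite (linearly ordered) vertex set `U`
describing a perfect matching with loops, and let a *directed perfect
matching* be a family `(e_i)_{i ∈ U}` of edges with `edge (e_i) = {i, σ i}`
for all `i`.  Call such a family *bad* if `e_j ≠ e_{σ j}` for some `j`.
Then the swap operation `R_σ` — exchanging `e_j` and `e_{σ j}` at the least
bad `j` — is a fixed-point-free involution on the bad directed matchings;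
in particular, the number of bad directed perfect matchings is even. -/
theorem bad_directed_matchings_even {U ι : Type*} [Fintype U] [LinearOrder U]
    [Fintype ι] (edge : ι → Finset U) (σ : Equiv.Perm U) (hσ : σ * σ = 1) :
    (∀ d : U → ι, (∀ i, edge (d i) = ({i, σ i} : Finset U)) →
        ¬ (∀ i, d i = d (σ i)) →
      swapAtLeastBad σ d ≠ d ∧
      swapAtLeastBad σ (swapAtLeastBad σ d) = d ∧
      (∀ i, edge ((swapAtLeastBad σ d) i) = ({i, σ i} : Finset U)) ∧
      ¬ (∀ i, swapAtLeastBad σ d i = swapAtLeastBad σ d (σ i))) ∧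
    Even ((Finset.univ.filter fun d : U → ι =>
        (∀ i, edge (d i) = ({i, σ i} : Finset U)) ∧
        ¬ (∀ i, d i = d (σ i))).card) := by
  have hσ2 : ∀ x, σ (σ x) = x := fun x => by
    have := congrArg (fun p : Equiv.Perm U => p x) hσ
    simpa using this
  have key : ∀ d : U → ι, (∀ i, edge (d i) = ({i, σ i} : Finset U)) →
      ¬ (∀ i, d i = d (σ i)) →
      swapAtLeastBad σ d ≠ d ∧
      swapAtLeastBad σ (swapAtLeastBad σ d) = d ∧
      (∀ i, edge ((swapAtLeastBad σ d) i) = ({i, σ i} : Finset U)) ∧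
      ¬ (∀ i, swapAtLeastBad σ d i = swapAtLeastBad σ d (σ i)) := by
    intro d hedge hbad
    have hex : ∃ j, d j ≠ d (σ j) := by push_neg at hbad; exact hbad
    have hsne : (Finset.univ.filter fun j => d j ≠ d (σ j)).Nonempty :=
      ⟨hex.choose, Finset.mem_filter.mpr ⟨Finset.mem_univ _, hex.choose_spec⟩⟩
    set m := (Finset.univ.filter fun j => d j ≠ d (σ j)).min' hsne with hm_def
    have hm : d m ≠ d (σ m) :=
      (Finset.mem_filter.mp ((Finset.univ.filter fun j => d j ≠ d (σ j)).min'_mem hsne)).2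
    have hswap : swapAtLeastBad σ d = d ∘ Equiv.swap m (σ m) := by
      rw [swapAtLeastBad, dif_pos hex]
    set d' := swapAtLeastBad σ d with hd'
    have hd'm : d' m = d (σ m) := by
      rw [hswap]; simp [Equiv.swap_apply_left]
    have hd'σm : d' (σ m) = d m := by
      rw [hswap]; simp [Equiv.swap_apply_right]
    have hd'other : ∀ i, i ≠ m → i ≠ σ m → d' i = d i := by
      intro i h1 h2
      rw [hswap]; simp [Equiv.swap_apply_of_ne_of_ne h1 h2]
    have hbadset : ∀ j, (d' j ≠ d' (σ j)) ↔ (d j ≠ d (σ j)) := by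
      intro j
      rcases eq_or_ne j m with rfl | hjm
      · rw [hd'm, hd'σm]; exact ne_comm
      · rcases eq_or_ne j (σ m) with rfl | hjσm
        · rw [hσ2 m, hd'σm, hd'm]; exact ne_comm
        · have h1 : σ j ≠ m := fun h => hjσm (by rw [← h, hσ2])
          have h2 : σ j ≠ σ m := fun h => hjm (σ.injective h)
          rw [hd'other j hjm hjσm, hd'other (σ j) h1 h2]
    have hex' : ∃ j, d' j ≠ d' (σ j) := ⟨m, (hbadset m).mpr hm⟩
    have hsets : (Finset.univ.filter fun j => d' j ≠ d' (σ j)) =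
        (Finset.univ.filter fun j => d j ≠ d (σ j)) := by
      ext j; simp only [Finset.mem_filter, Finset.mem_univ, true_and, hbadset j]
    refine ⟨?_, ?_, ?_, ?_⟩
    · intro h
      have h1 : d' m = d m := congrFun h m
      rw [hd'm] at h1
      exact hm h1.symm
    · have hswap' : swapAtLeastBad σ d' = d' ∘ Equiv.swap m (σ m) := by
        rw [swapAtLeastBad, dif_pos hex']
        have : (Finset.univ.filter fun j => d' j ≠ d' (σ j)).min'
            (by obtain ⟨j, hj⟩ := hex'
                exact ⟨j, Finset.mem_filter.mpr ⟨Finset.mem_univ _, hj⟩⟩) = m := by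
          simp only [hsets, hm_def]
        rw [this]
      rw [hswap', hswap]
      funext i
      simp [Function.comp, Equiv.swap_apply_self]
    · intro i
      rcases eq_or_ne i m with rfl | h1
      · rw [hd'm, hedge, hσ2]
        exact Finset.pair_comm _ _
      · rcases eq_or_ne i (σ m) with rfl | h2
        · rw [hd'σm, hedge, hσ2]
          exact Finset.pair_comm _ _
        · rw [hd'other i h1 h2]; exact hedge i
    · intro hall
      exact (hbadset m).mpr hm (hall m)
  refine ⟨key, ?_⟩
  set S := (Finset.univ.filter fun d : U → ι =>
      (∀ i, edge (d i) = ({i, σ i} : Finset U)) ∧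
      ¬ (∀ i, d i = d (σ i))) with hS
  have hmem : ∀ d ∈ S, swapAtLeastBad σ d ∈ S := by
    intro d hd
    rw [hS, Finset.mem_filter] at hd ⊢
    obtain ⟨-, h1, h2⟩ := hd
    obtain ⟨-, -, h3, h4⟩ := key d h1 h2
    exact ⟨Finset.mem_univ _, h3, h4⟩
  have h0 : ∑ _d ∈ S, (1 : ZMod 2) = 0 := by
    refine Finset.sum_involution (fun d _ => swapAtLeastBad σ d)
      (fun d _ => by decide) (fun d hd _ => ?_) (fun d hd => hmem d hd)
      (fun d hd => ?_)
    · rw [hS, Finset.mem_filter] at hd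
      exact (key d hd.2.1 hd.2.2).1
    · rw [hS, Finset.mem_filter] at hd
      exact (key d hd.2.1 hd.2.2).2.1
  rw [Finset.sum_const, nsmul_eq_mul, mul_one] at h0
  obtain ⟨k, hk⟩ := (ZMod.natCast_eq_zero_iff S.card 2).mp h0
  exact ⟨k, by omega⟩
end
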